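/- arXiv:1911.04867 — 2 statements merged into one kernel-verified Lean document; each statement's English description precedes it below -/
import Mathlib

section
/- Let (X,G) be a G-metric space with a convex structure W, and let T : X → X be a mapping having a fixed point u (Tu = u) such that G(Tx,Ty,Tz) ≤ a·G(x,y,z) + b·max{G(x,Tx,Tx), G(y,Ty,Ty), G(z,Tz,Tz)} for all x,y,z ∈ X, where a,b are real numbers with 0 < a + 3b < 1 and a,b ≥ 0. Let (α_n) be a sequence in [0,1] with ∑_{n=0}^∞ α_n = ∞, let x_0 ∈ X, and define the Mann iterative process x_{n+1} = W(x_n, T x_n; 1−α_n, α_n). Then G(x_n, u, u) → 0 as n → ∞, i.e. (x_n) converges strongly to the fixed point u of T. -/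
open Filter Topology

/-- A G-metric on a set `X` (Mustafa–Sims). The symmetry axiom (G5) is recorded via
the two generating permutations (swap of last two arguments and a cyclic shift),
from which all six equalities of (G5) follow. -/
structure GMetricStruct (X : Type*) where
  G : X → X → X → ℝ
  nonneg : ∀ x y z, 0 ≤ G x y z
  eq_zero_of_eq : ∀ x y z, x = y → y = z → G x y z = 0
  pos_of_ne : ∀ x y, x ≠ y → 0 < G x x y
  le_of_ne : ∀ x y z, z ≠ y → G x x y ≤ G x y z
  symm_swap : ∀ x y z, G x y z = G x z y
  symm_cycle : ∀ x y z, G x y z = G y z x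
  rect : ∀ x y z a, G x y z ≤ G x a a + G a y z

/-- A convex structure `W` on a G-metric space `(X, G)`:
for all `x, y, u, v` and `λ, β ∈ [0,1]` with `λ + β = 1`,
`G(W(x,y;λ,β), u, v) ≤ λ·G(x,u,v) + β·G(y,u,v)`. -/
def IsConvexStructure {X : Type*} (GM : GMetricStruct X) (W : X → X → ℝ → ℝ → X) : Prop :=
  ∀ x y u v : X, ∀ lam beta : ℝ, lam ∈ Set.Icc (0:ℝ) 1 → beta ∈ Set.Icc (0:ℝ) 1 →
    lam + beta = 1 →
    GM.G (W x y lam beta) u v ≤ lam * GM.G x u v + beta * GM.G y u v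

/-!
Around its fixed point `u`, `T` contracts `G(·, u, u)` by the factor `k = (a + ab + b)/(1 - b) < 1`.
Convexity then gives `G(x_{n+1}, u, u) ≤ (1 - (1 - k) α_n) G(x_n, u, u)`, and since
`1 - t ≤ exp (-t)`, `G(x_n, u, u) ≤ G(x_0, u, u) exp (-(1 - k) ∑_{j<n} α_j) → 0`.
-/

namespace GMetricStruct

variable {X : Type*} (GM : GMetricStruct X)

theorem G_self (x : X) : GM.G x x x = 0 :=
  GM.eq_zero_of_eq x x x rfl rfl

theorem G_le_two_mul_G (x y : X) : GM.G x y y ≤ 2 * GM.G y x x := by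
  have hcycle : GM.G x y y = GM.G y y x := GM.symm_cycle x y y
  have hrect : GM.G y y x ≤ GM.G y x x + GM.G x y x := GM.rect y y x x
  have hswap : GM.G x y x = GM.G y x x := (GM.symm_swap x y x).trans (GM.symm_cycle y x x).symm
  linarith

def IsMaxContraction (T : X → X) (a b : ℝ) : Prop :=
  ∀ x y z : X, GM.G (T x) (T y) (T z) ≤
    a * GM.G x y z + b * max (GM.G x (T x) (T x))
      (max (GM.G y (T y) (T y)) (GM.G z (T z) (T z)))

variable {GM}

/-- Apply the condition to `(y, u, u)` and to `(u, y, y)`, and bound `G(y,Ty,Ty)` through `u`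
by the rectangle inequality. -/
theorem IsMaxContraction.G_le_mul_of_isFixedPt {T : X → X} {a b : ℝ}
    (hT : GM.IsMaxContraction T a b) (ha : 0 ≤ a) (hb : 0 ≤ b) (hb1 : b < 1)
    {u : X} (hu : T u = u) (y : X) :
    GM.G (T y) u u ≤ (a + a * b + b) / (1 - b) * GM.G y u u := by
  have he : 0 ≤ GM.G y (T y) (T y) := GM.nonneg _ _ _
  have hTy : GM.G (T y) u u ≤ a * GM.G y u u + b * GM.G y (T y) (T y) := by
    simpa only [hu, GM.G_self, max_self, max_eq_left he] using hT y u u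
  have hTu : GM.G u (T y) (T y) ≤ 2 * a * GM.G y u u + b * GM.G y (T y) (T y) := by
    have h := hT u y y
    simp only [hu, GM.G_self, max_self, max_eq_right he] at h
    nlinarith [mul_le_mul_of_nonneg_left (GM.G_le_two_mul_G u y) ha]
  have hrect : GM.G y (T y) (T y) ≤ GM.G y u u + GM.G u (T y) (T y) := GM.rect y (T y) (T y) u
  have he_le : GM.G y (T y) (T y) * (1 - b) ≤ (1 + 2 * a) * GM.G y u u := by linarith
  rw [div_mul_eq_mul_div, le_div_iff₀ (by linarith)]
  nlinarith [mul_le_mul_of_nonneg_left he_le hb]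

end GMetricStruct

theorem IsConvexStructure.G_le_one_sub_mul {X : Type*} {GM : GMetricStruct X}
    {W : X → X → ℝ → ℝ → X} (hW : IsConvexStructure GM W) {T : X → X} {u : X} {k : ℝ}
    (hk : ∀ y, GM.G (T y) u u ≤ k * GM.G y u u) {t : ℝ} (ht : t ∈ Set.Icc (0 : ℝ) 1) (y : X) :
    GM.G (W y (T y) (1 - t) t) u u ≤ (1 - (1 - k) * t) * GM.G y u u :=
  calc GM.G (W y (T y) (1 - t) t) u u
      ≤ (1 - t) * GM.G y u u + t * GM.G (T y) u u :=
        hW y (T y) u u (1 - t) t ⟨by linarith [ht.2], by linarith [ht.1]⟩ ht (by ring)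
    _ ≤ (1 - t) * GM.G y u u + t * (k * GM.G y u u) := by gcongr; exacts [ht.1, hk y]
    _ = (1 - (1 - k) * t) * GM.G y u u := by ring

theorem le_mul_exp_neg_sum_of_succ_le_one_sub_mul {d β : ℕ → ℝ} (hd : ∀ n, 0 ≤ d n)
    (hstep : ∀ n, d (n + 1) ≤ (1 - β n) * d n) (n : ℕ) :
    d n ≤ d 0 * Real.exp (-∑ j ∈ Finset.range n, β j) := by
  induction n with
  | zero => simp
  | succ n ih =>
    have hexp : 1 - β n ≤ Real.exp (-β n) := by linarith [Real.add_one_le_exp (-β n)]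
    calc d (n + 1) ≤ (1 - β n) * d n := hstep n
      _ ≤ Real.exp (-β n) * (d 0 * Real.exp (-∑ j ∈ Finset.range n, β j)) := by
          gcongr
          exact hd n
      _ = d 0 * Real.exp (-∑ j ∈ Finset.range (n + 1), β j) := by
          rw [Finset.sum_range_succ, neg_add, Real.exp_add]; ring

theorem tendsto_zero_of_succ_le_one_sub_mul {d β : ℕ → ℝ} (hd : ∀ n, 0 ≤ d n)
    (hstep : ∀ n, d (n + 1) ≤ (1 - β n) * d n)
    (hβ : Tendsto (fun n => ∑ j ∈ Finset.range n, β j) atTop atTop) :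
    Tendsto d atTop (𝓝 0) := by
  have hbound : Tendsto (fun n => d 0 * Real.exp (-∑ j ∈ Finset.range n, β j)) atTop (𝓝 0) := by
    rw [← mul_zero (d 0)]
    exact (Real.tendsto_exp_atBot.comp (tendsto_neg_atTop_atBot.comp hβ)).const_mul (d 0)
  exact squeeze_zero hd (le_mul_exp_neg_sum_of_succ_le_one_sub_mul hd hstep) hbound

theorem mann_convergence_max_form_general {X : Type*} (GM : GMetricStruct X)
    (W : X → X → ℝ → ℝ → X) (hW : IsConvexStructure GM W)
    (T : X → X) (u : X) (hu : T u = u)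
    (a b : ℝ) (ha : 0 ≤ a) (hb : 0 ≤ b)
    (hlt : a + 3 * b < 1)
    (hT : ∀ x y z : X, GM.G (T x) (T y) (T z) ≤
      a * GM.G x y z + b * max (GM.G x (T x) (T x))
        (max (GM.G y (T y) (T y)) (GM.G z (T z) (T z))))
    (α : ℕ → ℝ) (hα : ∀ n, α n ∈ Set.Icc (0:ℝ) 1)
    (hdiv : Tendsto (fun n => ∑ k ∈ Finset.range n, α k) atTop atTop)
    (x : ℕ → X)
    (hrec : ∀ n, x (n + 1) = W (x n) (T (x n)) (1 - α n) (α n)) :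
    Tendsto (fun n => GM.G (x n) u u) atTop (𝓝 0) := by
  set k := (a + a * b + b) / (1 - b)
  have hk : k < 1 := by
    rw [div_lt_one (by linarith)]
    nlinarith
  have hcontr : ∀ y, GM.G (T y) u u ≤ k * GM.G y u u :=
    GMetricStruct.IsMaxContraction.G_le_mul_of_isFixedPt hT ha hb (by linarith) hu
  refine tendsto_zero_of_succ_le_one_sub_mul (β := fun n => (1 - k) * α n)
    (fun n => GM.nonneg _ _ _) (fun n => ?_) ?_
  · rw [hrec n]
    exact hW.G_le_one_sub_mul hcontr (hα n) (x n)
  · simpa only [← Finset.mul_sum] using hdiv.const_mul_atTop (sub_pos.2 hk)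

theorem mann_convergence_max_form {X : Type*} [Nonempty X] (GM : GMetricStruct X)
    (W : X → X → ℝ → ℝ → X) (hW : IsConvexStructure GM W)
    (T : X → X) (u : X) (hu : T u = u)
    (a b : ℝ) (ha : 0 ≤ a) (hb : 0 ≤ b)
    (hpos : 0 < a + 3 * b) (hlt : a + 3 * b < 1)
    (hT : ∀ x y z : X, GM.G (T x) (T y) (T z) ≤
      a * GM.G x y z + b * max (GM.G x (T x) (T x))
        (max (GM.G y (T y) (T y)) (GM.G z (T z) (T z))))
    (α : ℕ → ℝ) (hα : ∀ n, α n ∈ Set.Icc (0:ℝ) 1)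
    (hdiv : Tendsto (fun n => ∑ k ∈ Finset.range n, α k) atTop atTop)
    (x₀ : X) (x : ℕ → X) (hx0 : x 0 = x₀)
    (hrec : ∀ n, x (n + 1) = W (x n) (T (x n)) (1 - α n) (α n)) :
    Tendsto (fun n => GM.G (x n) u u) atTop (𝓝 0) :=
  mann_convergence_max_form_general GM W hW T u hu a b ha hb hlt hT α hα hdiv x hrec
end

section
/- Let (X,G) be a complete G-metric space and let T : X → X satisfy G(Tx,Ty,Tz) ≤ a·G(x,y,z) + b·G(x,Tx,Tx) + c·G(y,Ty,Ty) + d·G(z,Tz,Tz) for all x,y,z ∈ X, where a,b,c,d are nonnegative real numbers with a + b + c + d < 1. Then T has a unique fixed point u ∈ X (Tu = u), and T is G-continuous at u. -/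
open Filter Topology

/-- A sequence `x` G-converges to `l` iff `G(x_n, x_n, l) → 0`. -/
def GConvergesTo {X : Type*} (GM : GMetricStruct X) (x : ℕ → X) (l : X) : Prop :=
  Tendsto (fun n => GM.G (x n) (x n) l) atTop (𝓝 0)

/-- A sequence `x` is G-Cauchy iff `G(x_n, x_m, x_l) → 0` as `n, m, l → ∞`. -/
def GCauchySeq {X : Type*} (GM : GMetricStruct X) (x : ℕ → X) : Prop :=
  ∀ ε : ℝ, 0 < ε → ∃ N : ℕ, ∀ n ≥ N, ∀ m ≥ N, ∀ l ≥ N, GM.G (x n) (x m) (x l) < ε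

/-- A G-metric space is complete iff every G-Cauchy sequence G-converges. -/
def GComplete {X : Type*} (GM : GMetricStruct X) : Prop :=
  ∀ x : ℕ → X, GCauchySeq GM x → ∃ l : X, GConvergesTo GM x l

/-- `T` is G-continuous at `u` iff it maps sequences G-converging to `u`
to sequences G-converging to `T u`. -/
def GContinuousAt {X : Type*} (GM : GMetricStruct X) (T : X → X) (u : X) : Prop :=
  ∀ y : ℕ → X, GConvergesTo GM y u → GConvergesTo GM (fun n => T (y n)) (T u)


/-!
With `k = (a + b) / (1 - (c + d)) < 1`, the contractive condition applied to `(x, T x, T x)`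
gives `G(T x, T² x, T² x) ≤ k · G(x, T x, T x)`, so every Picard orbit is G-Cauchy and
converges to some `u`. Applied to `(xₙ, u, u)` it gives
`(1 - (c + d)) · G(u, T u, T u) ≤ (terms tending to 0)`, hence `T u = u`. Applied to
`(v, u, u)` for a second fixed point `v` it gives `(1 - a) · G(v, u, u) ≤ 0`, and applied to
`(y, y, u)` it gives `G(T y, T y, u) ≤ K · G(y, y, u)`, which is continuity at `u`.
-/

open Function

namespace GMetricStruct

variable {X : Type*} (GM : GMetricStruct X)

theorem G_le_two_mul (x y : X) : GM.G x y y ≤ 2 * GM.G x x y := by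
  have h := GM.rect y x y x
  rw [GM.symm_cycle y x y, GM.symm_cycle y x x] at h
  linarith

theorem G_le_two_mul_add (x y u : X) : GM.G x y y ≤ 2 * GM.G x x u + GM.G y y u :=
  calc GM.G x y y ≤ GM.G x u u + GM.G u y y := GM.rect _ _ _ _
    _ ≤ 2 * GM.G x x u + GM.G y y u := by
      rw [GM.symm_cycle u]
      linarith [GM.G_le_two_mul x u]

theorem G_le_add_add (x y z w : X) : GM.G x y z ≤ GM.G x w w + GM.G y w w + GM.G z w w := by
  have h₁ := GM.rect x y z w
  have h₂ := GM.rect y z w w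
  rw [GM.symm_cycle w y z] at h₁
  rw [GM.symm_cycle w z w] at h₂
  linarith

theorem eq_of_G_eq_zero {x y : X} (h : GM.G x y y = 0) : x = y := by
  by_contra hxy
  have := GM.pos_of_ne y x (Ne.symm hxy)
  rw [← GM.symm_cycle, h] at this
  exact this.false

end GMetricStruct

section Convergence

variable {X : Type*} (GM : GMetricStruct X)

theorem GConvergesTo.const (u : X) : GConvergesTo GM (fun _ => u) u := by
  simp only [GConvergesTo, GM.eq_zero_of_eq u u u rfl rfl, tendsto_const_nhds]

theorem GConvergesTo.comp_succ {x : ℕ → X} {u : X} (hx : GConvergesTo GM x u) :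
    GConvergesTo GM (fun n => x (n + 1)) u :=
  Tendsto.comp hx (tendsto_add_atTop_nat 1)

theorem GConvergesTo.tendsto_G {x y : ℕ → X} {u : X} (hx : GConvergesTo GM x u)
    (hy : GConvergesTo GM y u) :
    Tendsto (fun n => GM.G (x n) (y n) (y n)) atTop (𝓝 0) := by
  refine squeeze_zero (fun n => GM.nonneg _ _ _) (fun n => GM.G_le_two_mul_add _ _ u) ?_
  simpa using (hx.const_mul 2).add hy

theorem gContinuousAt_of_le_mul {T : X → X} {u : X} (K : ℝ)
    (h : ∀ y, GM.G (T y) (T y) (T u) ≤ K * GM.G y y u) : GContinuousAt GM T u := fun y hy =>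
  squeeze_zero (fun n => GM.nonneg _ _ _) (fun n => h (y n)) (by simpa using hy.const_mul K)

end Convergence

section Cauchy

variable {X : Type*} (GM : GMetricStruct X) {x : ℕ → X}

theorem gCauchySeq_of_le_tendsto_zero (bound : ℕ → ℝ)
    (h : ∀ n m, n ≤ m → GM.G (x n) (x m) (x m) ≤ bound n)
    (hbound : Tendsto bound atTop (𝓝 0)) : GCauchySeq GM x := by
  intro ε hε
  obtain ⟨N, hN⟩ := eventually_atTop.1 ((hbound.const_mul 6).eventually (gt_mem_nhds (by simpa)))
  refine ⟨N, fun n hn m hm l hl => ?_⟩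
  have hanchor : ∀ p, N ≤ p → GM.G (x p) (x N) (x N) ≤ 2 * bound N := fun p hp => by
    calc GM.G (x p) (x N) (x N) ≤ 2 * GM.G (x p) (x p) (x N) := GM.G_le_two_mul _ _
      _ = 2 * GM.G (x N) (x p) (x p) := by rw [← GM.symm_cycle (x N)]
      _ ≤ 2 * bound N := by linarith [h N p hp]
  linarith [GM.G_le_add_add (x n) (x m) (x l) (x N), hanchor n hn, hanchor m hm, hanchor l hl,
    hN N le_rfl]

theorem G_le_of_le_geometric {C r : ℝ} (hr : r < 1)
    (hx : ∀ n, GM.G (x n) (x (n + 1)) (x (n + 1)) ≤ C * r ^ n) (n m : ℕ) (hnm : n ≤ m) :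
    GM.G (x n) (x m) (x m) ≤ C * r ^ n / (1 - r) := by
  obtain ⟨j, rfl⟩ := Nat.exists_eq_add_of_le hnm
  have hr' : 0 < 1 - r := by linarith
  induction j generalizing n with
  | zero =>
    rw [Nat.add_zero, GM.eq_zero_of_eq _ _ _ rfl rfl]
    exact div_nonneg ((GM.nonneg _ _ _).trans (hx n)) hr'.le
  | succ j ih =>
    have htail := ih (n + 1) (by omega)
    rw [show n + 1 + j = n + (j + 1) by omega] at htail
    calc GM.G (x n) (x (n + (j + 1))) (x (n + (j + 1)))
        ≤ GM.G (x n) (x (n + 1)) (x (n + 1)) + GM.G (x (n + 1)) (x (n + (j + 1))) (x (n + (j + 1))) :=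
          GM.rect _ _ _ _
      _ ≤ C * r ^ n + C * r ^ (n + 1) / (1 - r) := add_le_add (hx n) htail
      _ = C * r ^ n / (1 - r) := by field_simp; ring

theorem gCauchySeq_of_le_geometric {C r : ℝ} (hr₀ : 0 ≤ r) (hr : r < 1)
    (hx : ∀ n, GM.G (x n) (x (n + 1)) (x (n + 1)) ≤ C * r ^ n) : GCauchySeq GM x := by
  refine gCauchySeq_of_le_tendsto_zero GM _ (G_le_of_le_geometric GM hr hx) ?_
  simpa using ((tendsto_pow_atTop_nhds_zero_of_lt_one hr₀ hr).const_mul C).div_const (1 - r)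

end Cauchy

def IsFourTermContraction {X : Type*} (GM : GMetricStruct X) (T : X → X) (a b c d : ℝ) : Prop :=
  ∀ x y z : X, GM.G (T x) (T y) (T z) ≤
    a * GM.G x y z + b * GM.G x (T x) (T x) + c * GM.G y (T y) (T y) + d * GM.G z (T z) (T z)

namespace IsFourTermContraction

variable {X : Type*} {GM : GMetricStruct X} {T : X → X} {a b c d : ℝ}

theorem G_map_map_le (hT : IsFourTermContraction GM T a b c d) (hcd : c + d < 1) (x : X) :
    GM.G (T x) (T (T x)) (T (T x)) ≤ (a + b) / (1 - (c + d)) * GM.G x (T x) (T x) := by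
  rw [div_mul_eq_mul_div, le_div_iff₀ (by linarith)]
  linarith [hT x (T x) (T x)]

theorem G_iterate_le_geometric (hT : IsFourTermContraction GM T a b c d) (hab : 0 ≤ a + b)
    (hcd : c + d < 1) (x : X) (n : ℕ) :
    GM.G (T^[n] x) (T^[n + 1] x) (T^[n + 1] x) ≤
      GM.G x (T x) (T x) * ((a + b) / (1 - (c + d))) ^ n := by
  induction n with
  | zero => simp
  | succ n ih =>
    have hstep := hT.G_map_map_le hcd (T^[n] x)
    rw [← iterate_succ_apply' T n, ← iterate_succ_apply' T (n + 1)] at hstep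
    calc GM.G (T^[n + 1] x) (T^[n + 1 + 1] x) (T^[n + 1 + 1] x)
        ≤ (a + b) / (1 - (c + d)) * GM.G (T^[n] x) (T^[n + 1] x) (T^[n + 1] x) := hstep
      _ ≤ (a + b) / (1 - (c + d)) * (GM.G x (T x) (T x) * ((a + b) / (1 - (c + d))) ^ n) :=
          mul_le_mul_of_nonneg_left ih (div_nonneg hab (by linarith))
      _ = GM.G x (T x) (T x) * ((a + b) / (1 - (c + d))) ^ (n + 1) := by ring

theorem isFixedPt_of_gConvergesTo (hT : IsFourTermContraction GM T a b c d) (hcd : c + d < 1)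
    {x₀ u : X} (hu : GConvergesTo GM (fun n => T^[n] x₀) u) : IsFixedPt T u := by
  have hu' := hu.comp_succ
  simp only [iterate_succ_apply'] at hu'
  have hbound : ∀ n, (1 - (c + d)) * GM.G u (T u) (T u) ≤
      GM.G u (T (T^[n] x₀)) (T (T^[n] x₀)) + a * GM.G (T^[n] x₀) u u
        + b * GM.G (T^[n] x₀) (T (T^[n] x₀)) (T (T^[n] x₀)) := fun n => by
    linarith [GM.rect u (T u) (T u) (T (T^[n] x₀)), hT (T^[n] x₀) u u]
  have hlim : Tendsto (fun n => GM.G u (T (T^[n] x₀)) (T (T^[n] x₀)) + a * GM.G (T^[n] x₀) u u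
      + b * GM.G (T^[n] x₀) (T (T^[n] x₀)) (T (T^[n] x₀))) atTop (𝓝 0) := by
    simpa using (((GConvergesTo.const GM u).tendsto_G GM hu').add
      ((hu.tendsto_G GM (GConvergesTo.const GM u)).const_mul a)).add
      ((hu.tendsto_G GM hu').const_mul b)
  have hle : (1 - (c + d)) * GM.G u (T u) (T u) ≤ 0 := ge_of_tendsto' hlim hbound
  have hzero : GM.G u (T u) (T u) = 0 :=
    le_antisymm (nonpos_of_mul_nonpos_right hle (by linarith)) (GM.nonneg _ _ _)
  exact (GM.eq_of_G_eq_zero hzero).symm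

theorem eq_of_isFixedPt (hT : IsFourTermContraction GM T a b c d) (ha : a < 1) {u v : X}
    (hu : IsFixedPt T u) (hv : IsFixedPt T v) : v = u := by
  have h := hT v u u
  simp only [hu.eq, hv.eq, GM.eq_zero_of_eq _ _ _ rfl rfl, mul_zero, add_zero] at h
  have hle : (1 - a) * GM.G v u u ≤ 0 := by linarith
  exact GM.eq_of_G_eq_zero
    (le_antisymm (nonpos_of_mul_nonpos_right hle (by linarith)) (GM.nonneg _ _ _))

theorem gContinuousAt_of_isFixedPt (hT : IsFourTermContraction GM T a b c d) (hbc₀ : 0 ≤ b + c)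
    (hbc : b + c < 1) {u : X} (hu : IsFixedPt T u) : GContinuousAt GM T u := by
  refine gContinuousAt_of_le_mul GM ((a + 2 * (b + c)) / (1 - (b + c))) fun y => ?_
  have h := hT y y u
  simp only [hu.eq, GM.eq_zero_of_eq _ _ _ rfl rfl, mul_zero, add_zero] at h
  rw [hu.eq, div_mul_eq_mul_div, le_div_iff₀ (by linarith)]
  nlinarith [mul_le_mul_of_nonneg_left (GM.G_le_two_mul_add y (T y) u) hbc₀]

end IsFourTermContraction

theorem fixed_point_four_term {X : Type*} [Nonempty X] (GM : GMetricStruct X)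
    (hcomp : GComplete GM) (T : X → X)
    (a b c d : ℝ) (ha : 0 ≤ a) (hb : 0 ≤ b) (hc : 0 ≤ c) (hd : 0 ≤ d)
    (habcd : a + b + c + d < 1)
    (hT : ∀ x y z : X, GM.G (T x) (T y) (T z) ≤
      a * GM.G x y z + b * GM.G x (T x) (T x) + c * GM.G y (T y) (T y)
        + d * GM.G z (T z) (T z)) :
    ∃ u : X, T u = u ∧ (∀ v : X, T v = v → v = u) ∧ GContinuousAt GM T u := by
  have hT : IsFourTermContraction GM T a b c d := hT
  have hcd : c + d < 1 := by linarith
  have hk₀ : 0 ≤ (a + b) / (1 - (c + d)) := div_nonneg (by linarith) (by linarith)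
  have hk : (a + b) / (1 - (c + d)) < 1 := (div_lt_one (by linarith)).2 (by linarith)
  obtain ⟨x₀⟩ := ‹Nonempty X›
  obtain ⟨u, hu⟩ := hcomp _ (gCauchySeq_of_le_geometric GM hk₀ hk
    (hT.G_iterate_le_geometric (by linarith) hcd x₀))
  have hfix : IsFixedPt T u := hT.isFixedPt_of_gConvergesTo hcd hu
  exact ⟨u, hfix, fun v hv => hT.eq_of_isFixedPt (by linarith) hfix hv,
    hT.gContinuousAt_of_isFixedPt (by linarith) (by linarith) hfix⟩
end
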